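/- Fix C > 1 and consider the instance with agents A = {1, 2} and chores G = {a, b}, with utilities u_{1a} = -1, u_{1b} = -C, u_{2a} = 0, u_{2b} = -1. Writing t = x_{1b} for an FPM x, the product of disutilities equals (-u_1 · x_1)(-u_2 · x_2) = ((1 - t) + C t)(1 - t), and the unique FPM minimizing this product over all FPMs is the one with t = 1 (i.e., x_{1b} = 1, x_{2a} = 1). At this minimizer, agent 1's disutility for their own bundle is -u_1 · x_1 = C while agent 1's disutility for agent 2's bundle is -u_1 · x_2 = 1, so agent 1 has factor C envy towards agent 2. -/
import Mathlib


open Finset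

/-- A fractional perfect matching (agents Fin 2, items Fin 2; item a = 0, b = 1). -/
def IsFPM (x : Fin 2 → Fin 2 → ℝ) : Prop :=
  (∀ i j, 0 ≤ x i j) ∧ (∀ i, ∑ j, x i j = 1) ∧ (∀ j, ∑ i, x i j = 1)

/-- Product of the two agents' disutilities. -/
def disutilProd (u x : Fin 2 → Fin 2 → ℝ) : ℝ :=
  (-(∑ j, u 0 j * x 0 j)) * (-(∑ j, u 1 j * x 1 j))

lemma fpm_coords {x : Fin 2 → Fin 2 → ℝ} (h : IsFPM x) :
    x 0 0 = 1 - x 0 1 ∧ x 1 0 = x 0 1 ∧ x 1 1 = 1 - x 0 1 := by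
  obtain ⟨hpos, hrow, hcol⟩ := h
  have h0 := hrow 0
  have h1 := hrow 1
  have hc0 := hcol 0
  have hc1 := hcol 1
  simp [Fin.sum_univ_two] at h0 h1 hc0 hc1
  refine ⟨by linarith, by linarith, by linarith⟩

/-- For the chores instance u₁ = (-1, -C), u₂ = (0, -1) with C > 1,
the product of disutilities of an FPM x equals ((1 - t) + C·t)(1 - t) where t = x₀ᵦ;
the unique minimizer over all FPMs is the FPM x* with x*₀ᵦ = 1, x*₁ₐ = 1; and at x*,
agent 1's disutility for its own bundle is C while its disutility for agent 2's
bundle is 1 (factor C envy). -/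
theorem nash_bargaining_disutility_min_unfair (C : ℝ) (hC : 1 < C)
    (u : Fin 2 → Fin 2 → ℝ)
    (hu : u = ![![-1, -C], ![0, -1]])
    (xstar : Fin 2 → Fin 2 → ℝ)
    (hxstar : xstar = ![![0, 1], ![1, 0]]) :
    (∀ x : Fin 2 → Fin 2 → ℝ, IsFPM x →
      disutilProd u x = ((1 - x 0 1) + C * x 0 1) * (1 - x 0 1)) ∧
    IsFPM xstar ∧
    (∀ x : Fin 2 → Fin 2 → ℝ, IsFPM x → disutilProd u xstar ≤ disutilProd u x) ∧
    (∀ x : Fin 2 → Fin 2 → ℝ, IsFPM x → disutilProd u x = disutilProd u xstar → x = xstar) ∧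
    (-(∑ j, u 0 j * xstar 0 j) = C) ∧
    (-(∑ j, u 0 j * xstar 1 j) = 1) := by
  subst hu hxstar
  have hform : ∀ x : Fin 2 → Fin 2 → ℝ, IsFPM x →
      disutilProd ![![-1, -C], ![0, -1]] x = ((1 - x 0 1) + C * x 0 1) * (1 - x 0 1) := by
    intro x hx
    obtain ⟨h00, h10, h11⟩ := fpm_coords hx
    simp only [disutilProd, Fin.sum_univ_two, Matrix.cons_val_zero, Matrix.cons_val_one,
      Matrix.head_cons]
    rw [h00, h11]; ring
  have hstar : IsFPM ![![0, 1], ![1, 0]] := by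
    refine ⟨?_, ?_, ?_⟩ <;> intro i <;> fin_cases i <;>
      first
        | (intro j; fin_cases j <;> norm_num)
        | simp [Fin.sum_univ_two]
  have hstarval : disutilProd ![![-1, -C], ![0, -1]] ![![0, 1], ![1, 0]] = 0 := by
    rw [hform _ hstar]; norm_num
  refine ⟨hform, hstar, ?_, ?_, ?_, ?_⟩
  · intro x hx
    rw [hstarval, hform _ hx]
    have ht0 : 0 ≤ x 0 1 := hx.1 0 1
    have ht1 : 0 ≤ 1 - x 0 1 := by
      have := (fpm_coords hx).2.2 ▸ hx.1 1 1
      linarith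
    have hf : 0 ≤ 1 - x 0 1 + C * x 0 1 := by nlinarith
    exact mul_nonneg hf ht1
  · intro x hx heq
    rw [hstarval, hform _ hx] at heq
    obtain ⟨h00, h10, h11⟩ := fpm_coords hx
    have ht0 : 0 ≤ x 0 1 := hx.1 0 1
    have hf : 0 < 1 - x 0 1 + C * x 0 1 := by nlinarith
    have ht1 : x 0 1 = 1 := by
      rcases mul_eq_zero.mp heq with h | h
      · linarith
      · linarith
    funext i j
    fin_cases i <;> fin_cases j <;> simp [h00, h10, h11, ht1]
  · simp [Fin.sum_univ_two]
  · simp [Fin.sum_univ_two]
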